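/- Fix an integer r ≥ 1 and for θ ∈ [0,π] let λ_1(θ) ≤ ⋯ ≤ λ_r(θ) denote the eigenvalues of Δ_θ^r in nondecreasing order, counted with multiplicity. Then for every 1 ≤ j ≤ r and each endpoint φ ∈ {0, π}, the function λ_j has a one-sided derivative at φ from within [0,π] (right-sided at 0, left-sided at π), and this one-sided derivative d satisfies |d| = (1/r)·√(4 − λ_j(φ)²). -/

import Mathlib

/-- The r×r matrix Δ_θ^r: ones on the off-diagonals, with twisted corner entries
e^{-iθ} (top-right) and e^{iθ} (bottom-left).  For r = 1 this gives (2cos θ) and for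
r = 2 it gives [[0, 1+e^{-iθ}],[1+e^{iθ}, 0]]. -/
noncomputable def deltaMatrix (r : ℕ) (θ : ℝ) : Matrix (Fin r) (Fin r) ℂ :=
  Matrix.of fun j k =>
    (if (j : ℤ) - (k : ℤ) = 1 ∨ (k : ℤ) - (j : ℤ) = 1 then 1 else 0)
    + (if (j : ℕ) = 0 ∧ (k : ℕ) = r - 1 then Complex.exp (-(Complex.I * (θ : ℂ))) else 0)
    + (if (j : ℕ) = r - 1 ∧ (k : ℕ) = 0 then Complex.exp (Complex.I * (θ : ℂ)) else 0)

/-!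
Whenever `ω ^ r = e^{iθ}`, the vector `(ω ^ k)ₖ` is an eigenvector of `Δ_θ^r` with eigenvalue
`ω + ω⁻¹`. The `r` distinct `r`-th roots of `e^{iθ}` therefore form a Vandermonde eigenbasis,
and the eigenvalues are `-2 cos ((θ + π t) / r)` for the `r` integers `t ∈ [-r, r)` with
`t ≡ r mod 2`. Taking `t = j` or `t = -(j + 1)`, whichever has the right parity, puts
`|θ + π t|` in `[π j, π (j + 1)]` for `θ ∈ [0, π]`, so this enumeration is already sorted
and `λ_j` is the explicit function `-2 cos ((θ + π t) / r)` on `[0, π]`. Its derivative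
`2 sin ((θ + π t) / r) / r` has absolute value `√(4 - λ_j²) / r`.
-/

open Polynomial Matrix Real

theorem Fin.sum_ite_intCast_eq {M : Type*} [AddCommMonoid M] (r : ℕ) (a : ℤ) (c : M) :
    ∑ k : Fin r, (if (k : ℤ) = a then c else 0) = if 0 ≤ a ∧ a < r then c else 0 := by
  split_ifs with ha
  · rw [Finset.sum_eq_single_of_mem ⟨a.toNat, by omega⟩ (Finset.mem_univ _)]
    · simp [ha.1]
    · intro k _ hk
      rw [if_neg fun h => hk (Fin.ext (by simp; omega))]
  · exact Finset.sum_eq_zero fun k _ => if_neg (by omega)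

theorem deltaMatrix_mulVec_pow {r : ℕ} {θ : ℝ} {ω : ℂ} (hω : ω ≠ 0)
    (hωr : ω ^ r = Complex.exp (Complex.I * θ)) :
    deltaMatrix r θ *ᵥ (fun k : Fin r => ω ^ (k : ℕ)) =
      (ω + ω⁻¹) • fun k : Fin r => ω ^ (k : ℕ) := by
  ext m
  have hm := m.isLt
  have hE : Complex.exp (Complex.I * θ) = ω ^ (r : ℤ) := by rw [zpow_natCast, hωr]
  -- The corner entries `e^{∓iθ} = ω^{∓r}` wrap the row sum around: in every row it is
  -- `ω ^ (m - 1) + ω ^ (m + 1)`.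
  have hentry : ∀ k : Fin r, deltaMatrix r θ m k * ω ^ (k : ℕ) =
      (if (k : ℤ) = m - 1 then ω ^ ((m : ℤ) - 1) else 0)
      + (if (k : ℤ) = m + 1 then ω ^ ((m : ℤ) + 1) else 0)
      + (if (k : ℤ) = r - 1 then (if (m : ℤ) = 0 then ω ^ ((m : ℤ) - 1) else 0) else 0)
      + (if (k : ℤ) = 0 then (if (m : ℤ) = r - 1 then ω ^ ((m : ℤ) + 1) else 0) else 0) := by
    intro k
    have e1 : (m : ℤ) - k = 1 ↔ (k : ℤ) = m - 1 := by omega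
    have e2 : (k : ℤ) - m = 1 ↔ (k : ℤ) = m + 1 := by omega
    have e3 : (m : ℕ) = 0 ∧ (k : ℕ) = r - 1 ↔ (k : ℤ) = r - 1 ∧ (m : ℤ) = 0 := by
      omega
    have e4 : (m : ℕ) = r - 1 ∧ (k : ℕ) = 0 ↔ (k : ℤ) = 0 ∧ (m : ℤ) = r - 1 := by
      omega
    rw [← zpow_natCast]
    simp only [deltaMatrix, of_apply, e1, e2, e3, e4, add_mul, ite_mul, one_mul, zero_mul,
      ← ite_and, Complex.exp_neg, hE, ← _root_.zpow_neg]
    congr 1; congr 1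
    · split_ifs <;> first | omega | simp_all
    all_goals
      split_ifs with h
      · rw [h.1, h.2, ← zpow_add₀ hω]; ring_nf
      · rfl
  have hrow : ∑ k : Fin r, deltaMatrix r θ m k * ω ^ (k : ℕ) =
      ω ^ ((m : ℤ) - 1) + ω ^ ((m : ℤ) + 1) := by
    simp only [hentry, Finset.sum_add_distrib, Fin.sum_ite_intCast_eq]
    split_ifs <;> first | omega | abel
  simp only [mulVec, dotProduct, hrow, Pi.smul_apply, smul_eq_mul]
  rw [zpow_sub_one₀ hω, zpow_add_one₀ hω, zpow_natCast]
  ring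

theorem Matrix.charpoly_eq_prod_of_mul_eq_mul_diagonal {n R : Type*} [Fintype n]
    [DecidableEq n] [CommRing R] {A V : Matrix n n R} {d : n → R} (hV : IsUnit V.det)
    (h : A * V = V * diagonal d) : A.charpoly = ∏ i, (X - C (d i)) := by
  have hA : A = V * diagonal d * V⁻¹ := by rw [← h, mul_assoc, mul_nonsing_inv _ hV, mul_one]
  rw [hA, charpoly_mul_comm, ← mul_assoc, nonsing_inv_mul _ hV, one_mul, charpoly_diagonal]

def deltaShift (r j : ℕ) : ℤ := if (j + r) % 2 = 0 then j else -(j + 1)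

theorem deltaShift_injective (r : ℕ) : Function.Injective (deltaShift r) := by
  intro i j h
  unfold deltaShift at h
  split_ifs at h <;> omega

theorem deltaShift_mem_Ico {r j : ℕ} (hj : j < r) :
    deltaShift r j ∈ Set.Ico (-(r : ℤ)) r := by
  unfold deltaShift
  split_ifs <;> constructor <;> omega

theorem even_deltaShift_add (r j : ℕ) : Even (deltaShift r j + r) := by
  rw [Int.even_iff]
  unfold deltaShift
  split_ifs <;> omega

theorem abs_add_pi_mul_deltaShift_mem_Icc (r j : ℕ) {θ : ℝ} (hθ : θ ∈ Set.Icc 0 π) :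
    |θ + π * deltaShift r j| ∈ Set.Icc (π * j) (π * (j + 1)) := by
  obtain ⟨h0, hπ⟩ := hθ
  unfold deltaShift
  split_ifs
  · rw [abs_of_nonneg (by positivity)]
    push_cast
    constructor <;> linarith
  · rw [abs_of_nonpos (by push_cast; nlinarith [pi_pos])]
    push_cast
    constructor <;> linarith

noncomputable def deltaAngle (r j : ℕ) (θ : ℝ) : ℝ := (θ + π * deltaShift r j) / r

noncomputable def deltaEigenvalue (r j : ℕ) (θ : ℝ) : ℝ := -2 * cos (deltaAngle r j θ)

noncomputable def deltaRoot (r j : ℕ) (θ : ℝ) : ℂ :=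
  -Complex.exp (deltaAngle r j θ * Complex.I)

theorem deltaRoot_ne_zero (r j : ℕ) (θ : ℝ) : deltaRoot r j θ ≠ 0 :=
  neg_ne_zero.2 (Complex.exp_ne_zero _)

theorem deltaRoot_pow {r : ℕ} (hr : 0 < r) (j : ℕ) (θ : ℝ) :
    deltaRoot r j θ ^ r = Complex.exp (Complex.I * θ) := by
  have hangle : (r : ℂ) * (deltaAngle r j θ * Complex.I)
      = Complex.I * θ + deltaShift r j * (π * Complex.I) := by
    have : (r : ℂ) ≠ 0 := by exact_mod_cast hr.ne'
    simp only [deltaAngle]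
    push_cast
    field_simp
  rw [deltaRoot, neg_pow, ← Complex.exp_nat_mul, hangle, Complex.exp_add, Complex.exp_int_mul,
    Complex.exp_pi_mul_I, mul_left_comm, ← zpow_natCast, ← zpow_add₀ (by norm_num),
    add_comm, (even_deltaShift_add r j).neg_one_zpow, mul_one]

theorem deltaRoot_add_inv (r j : ℕ) (θ : ℝ) :
    deltaRoot r j θ + (deltaRoot r j θ)⁻¹ = deltaEigenvalue r j θ := by
  rw [deltaRoot, deltaEigenvalue, inv_neg, ← Complex.exp_neg]
  push_cast
  rw [neg_mul, Complex.two_cos, neg_mul]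
  ring

theorem deltaRoot_injective {r : ℕ} (θ : ℝ) :
    Function.Injective fun j : Fin r => deltaRoot r j θ := by
  intro i j h
  obtain ⟨n, hn⟩ := Complex.exp_eq_exp_iff_exists_int.1 (neg_inj.1 h)
  have hr : (r : ℝ) ≠ 0 := by have := i.pos; positivity
  have hreal : deltaAngle r i θ = deltaAngle r j θ + n * (2 * π) := by
    apply_fun Complex.im at hn
    simpa using hn
  have hshift : deltaShift r i = deltaShift r j + 2 * r * n := by
    simp only [deltaAngle] at hreal
    field_simp at hreal
    have : (deltaShift r i : ℝ) = deltaShift r j + 2 * r * n := by nlinarith [pi_pos]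
    exact_mod_cast this
  have hn0 : n = 0 := by
    obtain ⟨hi1, hi2⟩ := deltaShift_mem_Ico i.isLt
    obtain ⟨hj1, hj2⟩ := deltaShift_mem_Ico j.isLt
    rcases lt_trichotomy n 0 with h | h | h
    · nlinarith
    · exact h
    · nlinarith
  exact Fin.ext (deltaShift_injective r (by simpa [hn0] using hshift))

theorem deltaMatrix_charpoly {r : ℕ} (hr : 0 < r) (θ : ℝ) :
    (deltaMatrix r θ).charpoly = ∏ j : Fin r, (X - C (deltaEigenvalue r j θ : ℂ)) := by
  set ω : Fin r → ℂ := fun j => deltaRoot r j θ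
  apply charpoly_eq_prod_of_mul_eq_mul_diagonal (V := (vandermonde ω)ᵀ)
  · rw [det_transpose, isUnit_iff_ne_zero, det_vandermonde_ne_zero_iff]
    exact deltaRoot_injective θ
  · ext k j
    have hcol := congrFun
      (deltaMatrix_mulVec_pow (deltaRoot_ne_zero r j θ) (deltaRoot_pow hr j θ)) k
    simp only [mulVec, dotProduct, Pi.smul_apply, smul_eq_mul, deltaRoot_add_inv] at hcol
    rw [mul_diagonal]
    simp only [mul_apply, transpose_apply, vandermonde_apply]
    rw [hcol, mul_comm]

theorem deltaEigenvalue_monotone {r : ℕ} {θ : ℝ} (hθ : θ ∈ Set.Icc 0 π) :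
    Monotone fun j : Fin r => deltaEigenvalue r j θ := by
  intro i j hij
  have hr : (0 : ℝ) < r := by have := i.pos; positivity
  have hcos : ∀ k : ℕ, deltaEigenvalue r k θ = -2 * cos (|θ + π * deltaShift r k| / r) := by
    intro k
    rw [deltaEigenvalue, deltaAngle, ← Real.cos_abs, abs_div, abs_of_pos hr]
  have habs : |θ + π * deltaShift r i| ≤ |θ + π * deltaShift r j| := by
    rcases hij.eq_or_lt with h | h
    · rw [h]
    · have hi := (abs_add_pi_mul_deltaShift_mem_Icc r i hθ).2
      have hj := (abs_add_pi_mul_deltaShift_mem_Icc r j hθ).1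
      have : ((i : ℕ) : ℝ) + 1 ≤ j := by exact_mod_cast h
      nlinarith [pi_pos]
  have hj : |θ + π * deltaShift r j| / r ≤ π := by
    rw [div_le_iff₀ hr]
    have := (abs_add_pi_mul_deltaShift_mem_Icc r j hθ).2
    have : ((j : ℕ) : ℝ) + 1 ≤ r := by exact_mod_cast j.isLt
    nlinarith [pi_pos]
  dsimp only
  rw [hcos, hcos]
  have := cos_le_cos_of_nonneg_of_le_pi (by positivity) hj
    (div_le_div_of_nonneg_right habs hr.le)
  linarith

theorem Fin.eq_of_monotone_of_map_univ_eq {α : Type*} [LinearOrder α] {n : ℕ}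
    {g h : Fin n → α} (hg : Monotone g) (hh : Monotone h)
    (heq : Finset.univ.val.map g = Finset.univ.val.map h) : g = h := by
  apply List.ofFn_injective
  refine List.Perm.eq_of_sortedLE (List.sortedLE_ofFn_iff.2 hg) (List.sortedLE_ofFn_iff.2 hh) ?_
  rw [← Multiset.coe_eq_coe]
  rwa [Fin.univ_val_map, Fin.univ_val_map] at heq

theorem Fin.eq_of_monotone_of_prod_X_sub_C_eq {n : ℕ} {g h : Fin n → ℝ}
    (hg : Monotone g) (hh : Monotone h)
    (heq : ∏ i, (X - C ((g i : ℝ) : ℂ)) = ∏ i, (X - C ((h i : ℝ) : ℂ))) : g = h := by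
  have hroots : ∀ f : Fin n → ℝ, (∏ i, (X - C ((f i : ℝ) : ℂ))).roots
      = (Finset.univ.val.map f).map ((↑) : ℝ → ℂ) := by
    intro f
    rw [Finset.prod_eq_multiset_prod]
    simpa only [Multiset.map_map, Function.comp_def] using
      roots_multiset_prod_X_sub_C ((Finset.univ.val.map f).map ((↑) : ℝ → ℂ))
  apply eq_of_monotone_of_map_univ_eq hg hh
  apply Multiset.map_injective Complex.ofReal_injective
  rw [← hroots, ← hroots, heq]

theorem eigenvalues_eq_deltaEigenvalue {r : ℕ} (hr : 0 < r) {lam : Fin r → ℝ → ℝ}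
    (hsorted : ∀ θ : ℝ, Monotone fun j => lam j θ)
    (hcp : ∀ θ : ℝ, (deltaMatrix r θ).charpoly = ∏ j : Fin r, (X - C (lam j θ : ℂ)))
    {θ : ℝ} (hθ : θ ∈ Set.Icc 0 π) (j : Fin r) : lam j θ = deltaEigenvalue r j θ :=
  congrFun (Fin.eq_of_monotone_of_prod_X_sub_C_eq (hsorted θ) (deltaEigenvalue_monotone hθ)
    ((hcp θ).symm.trans (deltaMatrix_charpoly hr θ))) j

theorem hasDerivAt_deltaEigenvalue (r j : ℕ) (θ : ℝ) :
    HasDerivAt (deltaEigenvalue r j) (2 * sin (deltaAngle r j θ) / r) θ := by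
  have hangle : HasDerivAt (deltaAngle r j) (1 / r) θ :=
    ((hasDerivAt_id θ).add_const _).div_const _
  rw [show 2 * sin (deltaAngle r j θ) / r = -2 * (-sin (deltaAngle r j θ) * (1 / r)) by ring]
  exact ((hasDerivAt_cos _).comp θ hangle).const_mul (-2)

theorem abs_two_mul_sin_deltaAngle_div (r j : ℕ) (θ : ℝ) :
    |2 * sin (deltaAngle r j θ) / r| = 1 / r * √(4 - deltaEigenvalue r j θ ^ 2) := by
  have hsq : 4 - deltaEigenvalue r j θ ^ 2 = (2 * sin (deltaAngle r j θ)) ^ 2 := by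
    rw [deltaEigenvalue]
    nlinarith [Real.sin_sq_add_cos_sq (deltaAngle r j θ)]
  rw [hsq, Real.sqrt_sq_eq_abs, abs_div, Nat.abs_cast]
  ring

open Polynomial in
theorem deltaMatrix_eigenvalue_deriv_endpoints_general (r : ℕ)
    (lam : Fin r → ℝ → ℝ)
    (hsorted : ∀ θ : ℝ, Monotone fun j => lam j θ)
    (hcp : ∀ θ : ℝ, (deltaMatrix r θ).charpoly =
      ∏ j : Fin r, (X - C ((lam j θ : ℝ) : ℂ))) :
    ∀ j : Fin r,
      (∃ d : ℝ, HasDerivWithinAt (lam j) d (Set.Icc 0 Real.pi) 0 ∧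
        |d| = (1 / (r : ℝ)) * Real.sqrt (4 - (lam j 0) ^ 2)) ∧
      (∃ d : ℝ, HasDerivWithinAt (lam j) d (Set.Icc 0 Real.pi) Real.pi ∧
        |d| = (1 / (r : ℝ)) * Real.sqrt (4 - (lam j Real.pi) ^ 2)) := by
  intro j
  have hlam : ∀ θ ∈ Set.Icc 0 π, lam j θ = deltaEigenvalue r j θ := fun θ hθ =>
    eigenvalues_eq_deltaEigenvalue j.pos hsorted hcp hθ j
  have hderiv : ∀ φ ∈ Set.Icc 0 π,
      ∃ d : ℝ, HasDerivWithinAt (lam j) d (Set.Icc 0 π) φ ∧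
        |d| = 1 / r * √(4 - lam j φ ^ 2) := fun φ hφ =>
    ⟨_, (hasDerivAt_deltaEigenvalue r j φ).hasDerivWithinAt.congr hlam (hlam φ hφ),
      by rw [hlam φ hφ, abs_two_mul_sin_deltaAngle_div]⟩
  exact ⟨hderiv 0 ⟨le_rfl, pi_pos.le⟩, hderiv π ⟨pi_pos.le, le_rfl⟩⟩

open Polynomial in
/-- with λ_1(θ) ≤ ⋯ ≤ λ_r(θ) the eigenvalues of Δ_θ^r (counted with
multiplicity), each λ_j has a one-sided derivative d at each endpoint φ ∈ {0, π}
(from within [0,π]), and |d| = (1/r)·√(4 − λ_j(φ)²). -/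
theorem deltaMatrix_eigenvalue_deriv_endpoints (r : ℕ) (hr : 1 ≤ r)
    (lam : Fin r → ℝ → ℝ)
    (hsorted : ∀ θ : ℝ, Monotone fun j => lam j θ)
    (hcp : ∀ θ : ℝ, (deltaMatrix r θ).charpoly =
      ∏ j : Fin r, (X - C ((lam j θ : ℝ) : ℂ))) :
    ∀ j : Fin r,
      (∃ d : ℝ, HasDerivWithinAt (lam j) d (Set.Icc 0 Real.pi) 0 ∧
        |d| = (1 / (r : ℝ)) * Real.sqrt (4 - (lam j 0) ^ 2)) ∧
      (∃ d : ℝ, HasDerivWithinAt (lam j) d (Set.Icc 0 Real.pi) Real.pi ∧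
        |d| = (1 / (r : ℝ)) * Real.sqrt (4 - (lam j Real.pi) ^ 2)) :=
  deltaMatrix_eigenvalue_deriv_endpoints_general r lam hsorted hcp
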